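/- If M is an alternal mould with values in a field of characteristic 0, then Exp M = Σ_{n≥0} M^{×n}/n! is a symetral mould. -/

import Mathlib

open Classical

/-- The shuffle product of two words, as a multiset of words (with multiplicity). -/
def shuffle {A : Type*} : List A → List A → Multiset (List A)
  | [], b => {b}
  | x :: a, [] => {x :: a}
  | x :: a, y :: b =>
      (shuffle a (y :: b)).map (x :: ·) + (shuffle (x :: a) b).map (y :: ·)
termination_by a b => a.length + b.length
decreasing_by all_goals simp [List.length_cons]

/-- The mould product. -/
def mouldMul {A K : Type*} [Field K] (M N : List A → K) : List A → K := fun a =>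
  ∑ i ∈ Finset.range (a.length + 1), M (a.take i) * N (a.drop i)

/-- The unit mould. -/
noncomputable def mouldOne (A K : Type*) [Field K] : List A → K := fun a =>
  if a = [] then 1 else 0

/-- Iterated mould product `M^{×n}`. -/
noncomputable def mouldPow {A K : Type*} [Field K] (M : List A → K) : ℕ → List A → K
  | 0 => mouldOne A K
  | n + 1 => mouldMul M (mouldPow M n)

/-- Mould exponential `Exp M = Σ_{n≥0} M^{×n}/n!` (pointwise finite when `M^∅ = 0`). -/
noncomputable def mouldExp {A K : Type*} [Field K] (M : List A → K) : List A → K := fun a =>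
  ∑ n ∈ Finset.range (a.length + 1), (Nat.factorial n : K)⁻¹ * mouldPow M n a

/-- Alternality. -/
def Alternal {A K : Type*} [Field K] (M : List A → K) : Prop :=
  M [] = 0 ∧ ∀ a b : List A, a ≠ [] → b ≠ [] → ((shuffle a b).map M).sum = 0

/-- Symetrality. -/
def Symetral {A K : Type*} [Field K] (M : List A → K) : Prop :=
  ∀ a b : List A, ((shuffle a b).map M).sum = M a * M b

section Aux

variable {A K : Type*} [Field K]

lemma shuffle_nil_left (b : List A) : shuffle [] b = {b} := by rw [shuffle]

lemma shuffle_nil_right (a : List A) : shuffle a [] = {a} := by cases a <;> rw [shuffle]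

/-- The sum of a mould over the shuffles of two words. -/
noncomputable def Ssum (f : List A → K) (a b : List A) : K := ((shuffle a b).map f).sum

lemma Ssum_nil_left (f : List A → K) (b : List A) : Ssum f [] b = f b := by
  simp [Ssum, shuffle_nil_left]

lemma Ssum_nil_right (f : List A → K) (a : List A) : Ssum f a [] = f a := by
  simp [Ssum, shuffle_nil_right]

lemma Ssum_cons_cons (f : List A → K) (x y : A) (a b : List A) :
    Ssum f (x :: a) (y :: b) =
      Ssum (fun w => f (x :: w)) a (y :: b) + Ssum (fun w => f (y :: w)) (x :: a) b := by
  rw [Ssum, shuffle]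
  simp [Multiset.map_map, Ssum, Function.comp]

lemma Ssum_add (f g : List A → K) (a b : List A) :
    Ssum (fun w => f w + g w) a b = Ssum f a b + Ssum g a b := by
  simp [Ssum, Multiset.sum_map_add]

lemma Ssum_mul_left (r : K) (f : List A → K) (a b : List A) :
    Ssum (fun w => r * f w) a b = r * Ssum f a b := by
  simp [Ssum, Multiset.sum_map_mul_left]

lemma mouldMul_cons (f g : List A → K) (x : A) (c : List A) :
    mouldMul f g (x :: c) = f [] * g (x :: c) + mouldMul (fun w => f (x :: w)) g c := by
  rw [mouldMul, List.length_cons, Finset.sum_range_succ']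
  simp [mouldMul, add_comm]

/-- Peeling off index 0 in both coordinates of a double sum. -/
lemma double_peel (F : ℕ → ℕ → K) (n m : ℕ) :
    (∑ i ∈ Finset.range (n + 1 + 1), ∑ j ∈ Finset.range (m + 1 + 1), F i j) =
      ((∑ i ∈ Finset.range (n + 1), ∑ j ∈ Finset.range (m + 1), F (i + 1) (j + 1))
        + ∑ i ∈ Finset.range (n + 1), F (i + 1) 0)
        + ((∑ j ∈ Finset.range (m + 1), F 0 (j + 1)) + F 0 0) := by
  rw [Finset.sum_range_succ' (fun i => ∑ j ∈ Finset.range (m + 1 + 1), F i j) (n + 1),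
    Finset.sum_range_succ' (F 0) (m + 1)]
  have h : ∀ i, (∑ j ∈ Finset.range (m + 1 + 1), F (i + 1) j) =
      (∑ j ∈ Finset.range (m + 1), F (i + 1) (j + 1)) + F (i + 1) 0 :=
    fun i => Finset.sum_range_succ' (F (i + 1)) (m + 1)
  simp only [h, Finset.sum_add_distrib]

/-- The shuffle-bialgebra identity: the deconcatenation coproduct of a shuffle. -/
theorem ssum_mouldMul (f g : List A → K) (a b : List A) :
    Ssum (mouldMul f g) a b =
      ∑ i ∈ Finset.range (a.length + 1), ∑ j ∈ Finset.range (b.length + 1),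
        Ssum f (a.take i) (b.take j) * Ssum g (a.drop i) (b.drop j) := by
  match a, b with
  | [], b => simp [Ssum_nil_left, mouldMul]
  | x :: a, [] => simp [Ssum_nil_right, mouldMul]
  | x :: a, y :: b =>
      have IH1 := ssum_mouldMul (fun w => f (x :: w)) g a (y :: b)
      have IH2 := ssum_mouldMul (fun w => f (y :: w)) g (x :: a) b
      -- clean up IH1: peel inner j
      rw [List.length_cons] at IH1
      have h1 : ∀ i ∈ Finset.range (a.length + 1),
          (∑ j ∈ Finset.range (b.length + 1 + 1),
            Ssum (fun w => f (x :: w)) (a.take i) ((y :: b).take j) *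
              Ssum g (a.drop i) ((y :: b).drop j)) =
          (∑ j ∈ Finset.range (b.length + 1),
            Ssum (fun w => f (x :: w)) (a.take i) (y :: b.take j) *
              Ssum g (a.drop i) (b.drop j))
            + f (x :: a.take i) * Ssum g (a.drop i) (y :: b) := by
        intro i _
        rw [Finset.sum_range_succ' (fun j => Ssum (fun w => f (x :: w)) (a.take i) ((y :: b).take j) *
          Ssum g (a.drop i) ((y :: b).drop j)) (b.length + 1)]
        simp [Ssum_nil_right]
      rw [Finset.sum_congr rfl h1, Finset.sum_add_distrib] at IH1
      -- clean up IH2: peel outer i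
      rw [List.length_cons, Finset.sum_range_succ' (fun i =>
        ∑ j ∈ Finset.range (b.length + 1),
          Ssum (fun w => f (y :: w)) ((x :: a).take i) (b.take j) *
            Ssum g ((x :: a).drop i) (b.drop j)) (a.length + 1)] at IH2
      simp only [List.take_succ_cons, List.drop_succ_cons, List.take_zero, List.drop_zero,
        Ssum_nil_left] at IH2
      -- left-hand side
      rw [Ssum_cons_cons]
      simp only [mouldMul_cons]
      rw [Ssum_add, Ssum_add, Ssum_mul_left, Ssum_mul_left, IH1, IH2]
      -- right-hand side
      rw [List.length_cons, List.length_cons,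
        double_peel (fun i j => Ssum f ((x :: a).take i) ((y :: b).take j) *
          Ssum g ((x :: a).drop i) ((y :: b).drop j)) a.length b.length]
      simp only [List.take_succ_cons, List.drop_succ_cons, List.take_zero, List.drop_zero,
        Ssum_nil_left, Ssum_nil_right, Ssum_cons_cons f x y, add_mul, Finset.sum_add_distrib]
      rw [Ssum_cons_cons g x y]
      ring
termination_by a.length + b.length

lemma length_mem_shuffle (a b : List A) : ∀ c ∈ shuffle a b,
    c.length = a.length + b.length := by
  match a, b with
  | [], b => simp [shuffle_nil_left]
  | x :: a, [] => simp [shuffle_nil_right]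
  | x :: a, y :: b =>
      intro c hc
      rw [shuffle] at hc
      rcases Multiset.mem_add.1 hc with h | h <;>
        obtain ⟨d, hd, rfl⟩ := Multiset.mem_map.1 h
      · have := length_mem_shuffle a (y :: b) d hd
        simp_all; omega
      · have := length_mem_shuffle (x :: a) b d hd
        simp_all; omega
termination_by a.length + b.length

lemma mouldPow_eq_zero (M : List A → K) (hM0 : M [] = 0) :
    ∀ (n : ℕ) (a : List A), a.length < n → mouldPow M n a = 0 := by
  intro n
  induction n with
  | zero => intro a h; omega
  | succ n ih =>
      intro a h
      rw [mouldPow, mouldMul, Finset.sum_range_succ']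
      rw [Finset.sum_eq_zero, List.take_zero, hM0, zero_mul, add_zero]
      intro i hi
      rw [Finset.mem_range] at hi
      rw [ih (a.drop (i + 1)) (by simp; omega), mul_zero]

lemma ssum_one (a b : List A) :
    Ssum (mouldOne A K) a b = mouldOne A K a * mouldOne A K b := by
  rcases a with _ | ⟨x, a⟩
  · simp [Ssum_nil_left, mouldOne]
  · rw [Ssum, Multiset.sum_eq_zero]
    · simp [mouldOne]
    · intro r hr
      obtain ⟨c, hc, rfl⟩ := Multiset.mem_map.1 hr
      have hl := length_mem_shuffle _ _ _ hc
      have hne : c ≠ [] := by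
        intro h; rw [h] at hl; simp at hl; omega
      simp [mouldOne, hne]

lemma pascal_sum (n : ℕ) (u v : ℕ → K) :
    (∑ k ∈ Finset.range (n+1), (n.choose k : K) * u (k+1) * v (n-k))
      + (∑ k ∈ Finset.range (n+1), (n.choose k : K) * u k * v (n-k+1))
    = ∑ k ∈ Finset.range (n+1+1), ((n+1).choose k : K) * u k * v (n+1-k) := by
  rw [Finset.sum_range_succ' (fun k => ((n+1).choose k : K) * u k * v (n+1-k)) (n+1)]
  have h1 : ∀ k ∈ Finset.range (n+1), ((n+1).choose (k+1) : K) * u (k+1) * v (n+1-(k+1))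
      = (n.choose k : K) * u (k+1) * v (n-k) + (n.choose (k+1) : K) * u (k+1) * v (n-k) := by
    intro k hk
    rw [Nat.choose_succ_succ, Nat.succ_sub_succ]
    push_cast
    ring
  rw [Finset.sum_congr rfl h1, Finset.sum_add_distrib]
  have h2 : (∑ k ∈ Finset.range (n+1), (n.choose (k+1) : K) * u (k+1) * v (n-k))
      + ((n+1).choose 0 : K) * u 0 * v (n+1-0)
      = ∑ k ∈ Finset.range (n+1), (n.choose k : K) * u k * v (n-k+1) := by
    rw [Finset.sum_range_succ' (fun k => (n.choose k : K) * u k * v (n-k+1)) n]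
    congr 1
    · rw [Finset.sum_range_succ]
      simp only [Nat.choose_succ_self, Nat.cast_zero, zero_mul, add_zero]
      refine Finset.sum_congr rfl fun k hk => ?_
      rw [Finset.mem_range] at hk
      rw [show n - (k+1) + 1 = n - k by omega]
    · simp
  rw [← h2]; ring

/-- The binomial formula for the shuffle-sum of a power of an alternal mould. -/
theorem ssum_pow (M : List A → K) (hM : Alternal M) :
    ∀ (n : ℕ) (a b : List A),
      Ssum (mouldPow M n) a b =
        ∑ k ∈ Finset.range (n+1),
          (n.choose k : K) * mouldPow M k a * mouldPow M (n-k) b := by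
  intro n
  induction n with
  | zero => intro a b; simpa [mouldPow] using ssum_one a b
  | succ n ih =>
      intro a b
      rw [show mouldPow M (n+1) = mouldMul M (mouldPow M n) from rfl, ssum_mouldMul]
      -- rows with i ≥ 1 collapse by alternality
      have hrow : ∀ i ∈ Finset.range a.length,
          (∑ j ∈ Finset.range (b.length+1), Ssum M (a.take (i+1)) (b.take j) *
            Ssum (mouldPow M n) (a.drop (i+1)) (b.drop j))
          = M (a.take (i+1)) * Ssum (mouldPow M n) (a.drop (i+1)) b := by
        intro i hi
        rw [Finset.mem_range] at hi
        have hta : a.take (i+1) ≠ [] := by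
          intro h
          have := congrArg List.length h
          simp only [List.length_take, List.length_nil] at this
          omega
        rw [Finset.sum_range_succ' (fun j => Ssum M (a.take (i+1)) (b.take j) *
          Ssum (mouldPow M n) (a.drop (i+1)) (b.drop j)) b.length]
        rw [Finset.sum_eq_zero, zero_add]
        · simp [Ssum_nil_right]
        · intro j hj
          rw [Finset.mem_range] at hj
          have htb : b.take (j+1) ≠ [] := by
            intro h
            have := congrArg List.length h
            simp only [List.length_take, List.length_nil] at this
            omega
          rw [show Ssum M (a.take (i+1)) (b.take (j+1)) = 0 from
            hM.2 _ _ hta htb, zero_mul]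
      rw [Finset.sum_range_succ' (fun i => ∑ j ∈ Finset.range (b.length+1),
        Ssum M (a.take i) (b.take j) * Ssum (mouldPow M n) (a.drop i) (b.drop j)) a.length,
        Finset.sum_congr rfl hrow]
      simp only [List.take_zero, List.drop_zero, Ssum_nil_left]
      -- extend the first sum back to include i = 0
      have hext : (∑ i ∈ Finset.range (a.length+1),
          M (a.take i) * Ssum (mouldPow M n) (a.drop i) b)
          = ∑ i ∈ Finset.range a.length,
            M (a.take (i+1)) * Ssum (mouldPow M n) (a.drop (i+1)) b := by
        rw [Finset.sum_range_succ' (fun i => M (a.take i) * Ssum (mouldPow M n) (a.drop i) b)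
          a.length]
        simp [hM.1]
      rw [← hext]
      simp only [ih]
      -- exchange summation and factor
      have hA : (∑ i ∈ Finset.range (a.length+1), M (a.take i) *
            ∑ k ∈ Finset.range (n+1),
              (n.choose k : K) * mouldPow M k (a.drop i) * mouldPow M (n-k) b)
          = ∑ k ∈ Finset.range (n+1),
              (n.choose k : K) * mouldPow M (k+1) a * mouldPow M (n-k) b := by
        simp only [Finset.mul_sum]
        rw [Finset.sum_comm]
        refine Finset.sum_congr rfl fun k _ => ?_
        rw [show mouldPow M (k+1) a = mouldMul M (mouldPow M k) a from rfl]
        simp only [mouldMul]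
        rw [Finset.mul_sum, Finset.sum_mul]
        exact Finset.sum_congr rfl fun i _ => by ring
      have hB : (∑ j ∈ Finset.range (b.length+1), M (b.take j) *
            ∑ k ∈ Finset.range (n+1),
              (n.choose k : K) * mouldPow M k a * mouldPow M (n-k) (b.drop j))
          = ∑ k ∈ Finset.range (n+1),
              (n.choose k : K) * mouldPow M k a * mouldPow M (n-k+1) b := by
        simp only [Finset.mul_sum]
        rw [Finset.sum_comm]
        refine Finset.sum_congr rfl fun k _ => ?_
        rw [show mouldPow M (n-k+1) b = mouldMul M (mouldPow M (n-k)) b from rfl]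
        simp only [mouldMul]
        rw [Finset.mul_sum]
        exact Finset.sum_congr rfl fun j _ => by ring
      rw [hA, hB, pascal_sum n (fun k => mouldPow M k a) (fun m => mouldPow M m b)]

end Aux

/-- the exponential of an alternal mould is symetral. -/
theorem symetral_mouldExp {A K : Type*} [Field K] [CharZero K] (M : List A → K)
    (hM : Alternal M) : Symetral (mouldExp M) := by
  intro a b
  classical
  set N := a.length + b.length with hN
  -- pull the sum defining the exponential out of the shuffle-sum
  have hmap : (shuffle a b).map (mouldExp M) =
      (shuffle a b).map (fun c => ∑ n ∈ Finset.range (N+1),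
        (n.factorial : K)⁻¹ * mouldPow M n c) := by
    refine Multiset.map_congr rfl fun c hc => ?_
    rw [mouldExp, length_mem_shuffle a b c hc]
  have hswap : ∀ (m : Multiset (List A)) (s : Finset ℕ) (h : ℕ → List A → K),
      (m.map (fun c => ∑ n ∈ s, h n c)).sum = ∑ n ∈ s, (m.map (h n)).sum := by
    intro m s h
    induction m using Multiset.induction with
    | empty => simp
    | cons x m ih => simp [ih, Finset.sum_add_distrib]
  rw [hmap, hswap]
  have hterm : ∀ n ∈ Finset.range (N+1),
      ((shuffle a b).map (fun c => (n.factorial : K)⁻¹ * mouldPow M n c)).sum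
        = ∑ p ∈ Finset.HasAntidiagonal.antidiagonal n,
            (p.1.factorial : K)⁻¹ * (p.2.factorial : K)⁻¹ *
              mouldPow M p.1 a * mouldPow M p.2 b := by
    intro n _
    rw [Multiset.sum_map_mul_left]
    rw [show ((shuffle a b).map (mouldPow M n)).sum = Ssum (mouldPow M n) a b from rfl]
    rw [ssum_pow M hM n a b,
      Finset.Nat.sum_antidiagonal_eq_sum_range_succ_mk
        (fun p => (p.1.factorial : K)⁻¹ * (p.2.factorial : K)⁻¹ *
          mouldPow M p.1 a * mouldPow M p.2 b) n]
    rw [Finset.mul_sum]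
    refine Finset.sum_congr rfl fun k hk => ?_
    rw [Finset.mem_range] at hk
    have hkn : k ≤ n := by omega
    have hfac : (n.factorial : K)⁻¹ * (n.choose k : K)
        = (k.factorial : K)⁻¹ * ((n-k).factorial : K)⁻¹ := by
      have h := Nat.choose_mul_factorial_mul_factorial hkn
      have h1 : (n.factorial : K) ≠ 0 := Nat.cast_ne_zero.2 n.factorial_ne_zero
      have h2 : (k.factorial : K) ≠ 0 := Nat.cast_ne_zero.2 k.factorial_ne_zero
      have h3 : ((n-k).factorial : K) ≠ 0 := Nat.cast_ne_zero.2 (n-k).factorial_ne_zero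
      have h' : (n.choose k : K) * k.factorial * (n-k).factorial = n.factorial := by
        exact_mod_cast congrArg (Nat.cast : ℕ → K) h
      field_simp
      linear_combination h'
    calc (n.factorial : K)⁻¹ * ((n.choose k : K) * mouldPow M k a * mouldPow M (n-k) b)
        = ((n.factorial : K)⁻¹ * (n.choose k : K)) * mouldPow M k a * mouldPow M (n-k) b := by
          ring
      _ = (k.factorial : K)⁻¹ * ((n-k).factorial : K)⁻¹ *
            mouldPow M k a * mouldPow M (n-k) b := by rw [hfac]
  rw [Finset.sum_congr rfl hterm]
  -- regroup the triangular sum over the rectangle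
  have hfib := Finset.sum_fiberwise_of_maps_to
    (s := Finset.range (a.length+1) ×ˢ Finset.range (b.length+1))
    (t := Finset.range (N+1)) (g := fun p : ℕ × ℕ => p.1 + p.2)
    (fun p hp => by
      rw [Finset.mem_product, Finset.mem_range, Finset.mem_range] at hp
      simp only [Finset.mem_range, hN]
      omega)
    (fun p : ℕ × ℕ => (p.1.factorial : K)⁻¹ * (p.2.factorial : K)⁻¹ *
      mouldPow M p.1 a * mouldPow M p.2 b)
  have hfiber : ∀ n ∈ Finset.range (N+1),
      (∑ p ∈ (Finset.range (a.length+1) ×ˢ Finset.range (b.length+1)).filter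
          (fun p => p.1 + p.2 = n),
        (p.1.factorial : K)⁻¹ * (p.2.factorial : K)⁻¹ *
          mouldPow M p.1 a * mouldPow M p.2 b)
      = ∑ p ∈ Finset.HasAntidiagonal.antidiagonal n,
          (p.1.factorial : K)⁻¹ * (p.2.factorial : K)⁻¹ *
            mouldPow M p.1 a * mouldPow M p.2 b := by
    intro n _
    refine Finset.sum_subset ?_ ?_
    · intro p hp
      rw [Finset.mem_filter] at hp
      rw [Finset.HasAntidiagonal.mem_antidiagonal]
      exact hp.2
    · intro p hp hnp
      rw [Finset.HasAntidiagonal.mem_antidiagonal] at hp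
      rw [Finset.mem_filter, Finset.mem_product, Finset.mem_range, Finset.mem_range] at hnp
      by_cases h1 : p.1 ≤ a.length
      · have h2 : b.length < p.2 := by omega
        rw [mouldPow_eq_zero M hM.1 p.2 b h2, mul_zero]
      · rw [mouldPow_eq_zero M hM.1 p.1 a (by omega), mul_zero, zero_mul]
  rw [← Finset.sum_congr rfl hfiber, hfib, Finset.sum_product]
  -- finally, compute the right-hand side
  rw [mouldExp, mouldExp, Finset.sum_mul_sum]
  refine Finset.sum_congr rfl fun k _ => Finset.sum_congr rfl fun m _ => ?_
  ring
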